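/- arXiv:1205.2554 — 3 statements merged into one kernel-verified Lean document; each statement's English description precedes it below -/
import Mathlib

section
/- Under the hypothesis of the strategy-transfer lemma (a utility-preserving surjection p ↦ p' from ∃'s pure strategies of G₁ onto those of G₂ ⊆ G₁, identity on G₂, with the same ∀-strategy set), the game G₁ has an equilibrium if and only if G₂ has an equilibrium, and in that case their values coincide. -/
/-- A mixed strategy: a probability distribution on a finite set of pure
strategies. -/
def IsMixed {α : Type*} [Fintype α] (μ : α → ℝ) : Prop :=
  (∀ a, 0 ≤ μ a) ∧ ∑ a, μ a = 1

/-- A mixed strategy of the subgame `G₂`, whose ∃-strategies are the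
elements of `S₁` satisfying `P`: a mixed strategy supported on `P`. -/
def IsMixedOn {α : Type*} [Fintype α] (P : α → Prop) (μ : α → ℝ) : Prop :=
  IsMixed μ ∧ ∀ a, ¬ P a → μ a = 0

/-- Expected utility of the profile `(μ, ν)` for the utility function `u`. -/
def EUtil {S T : Type*} [Fintype S] [Fintype T]
    (u : S → T → ℝ) (μ : S → ℝ) (ν : T → ℝ) : ℝ :=
  ∑ s, ∑ t, μ s * ν t * u s t

/-- Equilibrium of `G₁` (∃-strategies: all of `S₁`). -/
def IsEquilibrium₁ {S T : Type*} [Fintype S] [Fintype T]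
    (uE uA : S → T → ℝ) (μ : S → ℝ) (ν : T → ℝ) : Prop :=
  IsMixed μ ∧ IsMixed ν ∧
  (∀ ζ, IsMixed ζ → EUtil uE ζ ν ≤ EUtil uE μ ν) ∧
  (∀ ξ, IsMixed ξ → EUtil uA μ ξ ≤ EUtil uA μ ν)

/-- Equilibrium of `G₂` (∃-strategies: the subset `P` of `S₁`). -/
def IsEquilibrium₂ {S T : Type*} [Fintype S] [Fintype T] (P : S → Prop)
    (uE uA : S → T → ℝ) (μ : S → ℝ) (ν : T → ℝ) : Prop :=
  IsMixedOn P μ ∧ IsMixed ν ∧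
  (∀ ζ, IsMixedOn P ζ → EUtil uE ζ ν ≤ EUtil uE μ ν) ∧
  (∀ ξ, IsMixed ξ → EUtil uA μ ξ ≤ EUtil uA μ ν)

/-- The pushforward of a mixed strategy along the map `f : S₁ → S₂`. -/
noncomputable def push {S : Type*} [Fintype S] [DecidableEq S]
    (f : S → S) (σ : S → ℝ) : S → ℝ :=
  fun p => ∑ q with f q = p, σ q

section Aux

open Finset

variable {S T : Type*} [Fintype S] [Fintype T]

lemma EUtil_push [DecidableEq S] (u : S → T → ℝ) (f : S → S) (σ : S → ℝ) (τ : T → ℝ) :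
    EUtil u (push f σ) τ = EUtil (fun p t => u (f p) t) σ τ := by
  unfold EUtil push
  calc ∑ s, ∑ t, (∑ q with f q = s, σ q) * τ t * u s t
      = ∑ s, ∑ q with f q = s, ∑ t, σ q * τ t * u s t := by
        refine Finset.sum_congr rfl fun s _ => ?_
        rw [Finset.sum_comm]
        refine Finset.sum_congr rfl fun t _ => ?_
        rw [Finset.sum_mul, Finset.sum_mul]
    _ = ∑ s, ∑ q with f q = s, ∑ t, σ q * τ t * u (f q) t := by
        refine Finset.sum_congr rfl fun s _ => Finset.sum_congr rfl fun q hq => ?_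
        rw [(Finset.mem_filter.1 hq).2]
    _ = ∑ q, ∑ t, σ q * τ t * u (f q) t :=
        Finset.sum_fiberwise _ _ _

lemma EUtil_eq_on {P : S → Prop} {u v : S → T → ℝ} {μ : S → ℝ}
    (hμ : ∀ a, ¬ P a → μ a = 0) (huv : ∀ s t, P s → u s t = v s t) (ν : T → ℝ) :
    EUtil u μ ν = EUtil v μ ν := by
  unfold EUtil
  refine Finset.sum_congr rfl fun s _ => Finset.sum_congr rfl fun t _ => ?_
  by_cases hP : P s
  · rw [huv s t hP]
  · rw [hμ s hP]; ring

lemma EUtil_compl {u v : S → T → ℝ} (h : ∀ s t, u s t + v s t = 1)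
    {μ : S → ℝ} {ν : T → ℝ} (hμ : ∑ s, μ s = 1) (hν : ∑ t, ν t = 1) :
    EUtil v μ ν = 1 - EUtil u μ ν := by
  unfold EUtil
  have key : ∀ s t, μ s * ν t * v s t = μ s * ν t - μ s * ν t * u s t := by
    intro s t
    have hv : v s t = 1 - u s t := by linarith [h s t]
    rw [hv]; ring
  simp_rw [key, Finset.sum_sub_distrib]
  have : ∑ s, ∑ t, μ s * ν t = 1 := by
    rw [← Finset.sum_mul_sum, hμ, hν]; norm_num
  rw [this]

lemma push_mixedOn [DecidableEq S] {P : S → Prop} {f : S → S}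
    (hrange : ∀ p, P (f p)) {σ : S → ℝ} (h : IsMixed σ) :
    IsMixedOn P (push f σ) := by
  refine ⟨⟨fun a => Finset.sum_nonneg fun q _ => h.1 q, ?_⟩, ?_⟩
  · exact (Finset.sum_fiberwise _ _ _).trans h.2
  · intro a ha
    refine Finset.sum_eq_zero fun q hq => absurd ?_ ha
    exact (Finset.mem_filter.1 hq).2 ▸ hrange q

lemma value_unique₂ (P : S → Prop) (uE uA : S → T → ℝ)
    (hsum : ∀ s t, uE s t + uA s t = 1) {μ ν μ' ν'}
    (h : IsEquilibrium₂ P uE uA μ ν) (h' : IsEquilibrium₂ P uE uA μ' ν') :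
    EUtil uE μ ν = EUtil uE μ' ν' := by
  obtain ⟨hμ, hν, hE, hA⟩ := h
  obtain ⟨hμ', hν', hE', hA'⟩ := h'
  have h1 : EUtil uE μ' ν ≤ EUtil uE μ ν := hE μ' hμ'
  have h2 : EUtil uE μ ν' ≤ EUtil uE μ' ν' := hE' μ hμ
  have h3 := hA' ν hν
  have h4 := hA ν' hν'
  rw [EUtil_compl hsum hμ'.1.2 hν.2, EUtil_compl hsum hμ'.1.2 hν'.2] at h3
  rw [EUtil_compl hsum hμ.1.2 hν'.2, EUtil_compl hsum hμ.1.2 hν.2] at h4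
  linarith

end Aux

/-- under the strategy-transfer hypotheses, `G₁` has an
equilibrium iff `G₂` has one, and in that case their values coincide. -/
theorem stmt3 {S T : Type*} [Fintype S] [Fintype T] [DecidableEq S]
    (P : S → Prop)
    (uE₁ uA₁ uE₂ uA₂ : S → T → ℝ)
    (hsum₁ : ∀ s t, uE₁ s t + uA₁ s t = 1)
    (hsum₂ : ∀ s t, uE₂ s t + uA₂ s t = 1)
    (f : S → S) (hrange : ∀ p, P (f p)) (hfix : ∀ p, P p → f p = p)
    (hu : ∀ p q, uE₂ (f p) q = uE₁ p q) :
    ((∃ σ τ, IsEquilibrium₁ uE₁ uA₁ σ τ) ↔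
      (∃ σ τ, IsEquilibrium₂ P uE₂ uA₂ σ τ)) ∧
    (∀ σ τ σ' τ', IsEquilibrium₁ uE₁ uA₁ σ τ →
      IsEquilibrium₂ P uE₂ uA₂ σ' τ' →
      EUtil uE₁ σ τ = EUtil uE₂ σ' τ') := by

  classical
  have hPu : ∀ s t, P s → uE₂ s t = uE₁ s t := fun s t hP => by
    rw [← hu s t, hfix s hP]
  have fwd : ∀ σ τ, IsEquilibrium₁ uE₁ uA₁ σ τ →
      IsEquilibrium₂ P uE₂ uA₂ (push f σ) τ ∧
        EUtil uE₂ (push f σ) τ = EUtil uE₁ σ τ := by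
    intro σ τ h
    obtain ⟨hσ, hτ, hE, hA⟩ := h
    have hpush : IsMixedOn P (push f σ) := push_mixedOn hrange hσ
    have hval : ∀ ξ : T → ℝ, EUtil uE₂ (push f σ) ξ = EUtil uE₁ σ ξ := by
      intro ξ
      rw [EUtil_push]
      unfold EUtil
      simp_rw [hu]
    refine ⟨⟨hpush, hτ, ?_, ?_⟩, hval τ⟩
    · intro ζ hζ
      rw [hval τ, EUtil_eq_on hζ.2 hPu τ]
      exact hE ζ hζ.1
    · intro ξ hξ
      rw [EUtil_compl hsum₂ hpush.1.2 hξ.2, EUtil_compl hsum₂ hpush.1.2 hτ.2,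
          hval ξ, hval τ]
      have h4 := hA ξ hξ
      rw [EUtil_compl hsum₁ hσ.2 hξ.2, EUtil_compl hsum₁ hσ.2 hτ.2] at h4
      linarith
  constructor
  · constructor
    · rintro ⟨σ, τ, h⟩
      exact ⟨push f σ, τ, (fwd σ τ h).1⟩
    · rintro ⟨σ', τ', hσ', hτ', hE', hA'⟩
      refine ⟨σ', τ', hσ'.1, hτ', ?_, ?_⟩
      · intro ζ hζ
        have h1 : EUtil uE₁ ζ τ' = EUtil uE₂ (push f ζ) τ' := by
          rw [EUtil_push]; unfold EUtil; simp_rw [hu]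
        have h2 := hE' (push f ζ) (push_mixedOn hrange hζ)
        have h3 : EUtil uE₂ σ' τ' = EUtil uE₁ σ' τ' := EUtil_eq_on hσ'.2 hPu τ'
        linarith
      · intro ξ hξ
        have h5 := hA' ξ hξ
        rw [EUtil_compl hsum₂ hσ'.1.2 hξ.2, EUtil_compl hsum₂ hσ'.1.2 hτ'.2] at h5
        rw [EUtil_compl hsum₁ hσ'.1.2 hξ.2, EUtil_compl hsum₁ hσ'.1.2 hτ'.2]
        have e1 : EUtil uE₂ σ' ξ = EUtil uE₁ σ' ξ := EUtil_eq_on hσ'.2 hPu ξ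
        have e2 : EUtil uE₂ σ' τ' = EUtil uE₁ σ' τ' := EUtil_eq_on hσ'.2 hPu τ'
        linarith
  · intro σ τ σ' τ' h h'
    obtain ⟨h2, hval⟩ := fwd σ τ h
    rw [← hval]
    exact value_unique₂ P uE₂ uA₂ hsum₂ h2 h'
end

section
/- For any IF sentence φ and any modification φ' of φ obtained by removing or adding variables in the slash sets of existential quantifiers only: Abélard has a winning strategy in G(φ, M) if and only if he has one in G(φ', M). In particular, φ is false in M iff φ' is false in M. -/
/-! Core model of prenex IF sentences and their imperfect-information
game semantics.

A quantifier prefix is a list of triples `(isUniversal, variable, slash set)`.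
A (prenex) IF sentence is such a prefix together with a quantifier-free
matrix `QF` interpreted in a structure `(M, I)`.  A strategy assigns to each
quantifier position a choice function on assignments; admissibility says the
choice function only depends on the variables visible at that position
(the superordinated variables minus the slash set).  Truth = existence of a
winning strategy for Éloïse, falsity = for Abélard. -/

abbrev Var := ℕ
abbrev Quant := Bool × Var × Finset Var   -- (isUniversal?, variable, slash set)
abbrev QPrefix := List Quant

def qUniv (Q : QPrefix) (i : ℕ) : Prop := (Q.getD i default).1 = true
def qvar (Q : QPrefix) (i : ℕ) : Var := (Q.getD i default).2.1
def qslash (Q : QPrefix) (i : ℕ) : Finset Var := (Q.getD i default).2.2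

/-- variables quantified superordinated to position `i`. -/
def varsBefore (Q : QPrefix) (i : ℕ) : Finset Var :=
  ((Q.take i).map (fun q => q.2.1)).toFinset

/-- the variables visible at position `i`. -/
def visible (Q : QPrefix) (i : ℕ) : Finset Var := varsBefore Q i \ qslash Q i

def agreeOn {M : Type*} (s t : Var → M) (A : Finset Var) : Prop :=
  ∀ v ∈ A, s v = t v

/-- A (pure) strategy: a choice function for every quantifier position. -/
abbrev Strat (M : Type*) := ℕ → (Var → M) → M

/-- Admissibility of an Éloïse strategy: at each existential position its
choice function depends only on the visible variables. -/
def EAdmissible {M : Type*} (Q : QPrefix) (σ : Strat M) : Prop :=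
  ∀ i, i < Q.length → ¬ qUniv Q i →
    ∀ s t : Var → M, agreeOn s t (visible Q i) → σ i s = σ i t

/-- Admissibility of an Abélard strategy (dually, at universal positions). -/
def AAdmissible {M : Type*} (Q : QPrefix) (τ : Strat M) : Prop :=
  ∀ i, i < Q.length → qUniv Q i →
    ∀ s t : Var → M, agreeOn s t (visible Q i) → τ i s = τ i t

/-- The terminal assignment of the play where Éloïse follows `σ` and
Abélard follows `τ`. -/
def outcome {M : Type*} (σ τ : Strat M) : QPrefix → ℕ → (Var → M) → (Var → M)
  | [], _, s => s
  | q :: rest, i, s =>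
      outcome σ τ rest (i + 1)
        (Function.update s q.2.1 (if q.1 then τ i s else σ i s))

/-- Quantifier-free matrices (atomic and negated atomic formulas, ∧, ∨). -/
inductive QF where
  | rel  : ℕ → List Var → QF
  | nrel : ℕ → List Var → QF
  | eq   : Var → Var → QF
  | neq  : Var → Var → QF
  | and  : QF → QF → QF
  | or   : QF → QF → QF

def QF.eval {M : Type*} (I : ℕ → List M → Prop) (s : Var → M) : QF → Prop
  | rel r ts => I r (ts.map s)
  | nrel r ts => ¬ I r (ts.map s)
  | eq a b => s a = s b
  | neq a b => s a ≠ s b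
  | and φ ψ => φ.eval I s ∧ ψ.eval I s
  | or φ ψ => φ.eval I s ∨ ψ.eval I s

/-- Truth of the prenex IF sentence `Q⃗ψ` in the structure `(M, I)`:
Éloïse has a winning strategy in the semantic game. -/
def TrueIn (M : Type*) (I : ℕ → List M → Prop) (Q : QPrefix) (ψ : QF) : Prop :=
  ∃ σ : Strat M, EAdmissible Q σ ∧
    ∀ τ : Strat M, ∀ s₀ : Var → M, ψ.eval I (outcome σ τ Q 0 s₀)

/-- Falsity: Abélard has a winning strategy. -/
def FalseIn (M : Type*) (I : ℕ → List M → Prop) (Q : QPrefix) (ψ : QF) : Prop :=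
  ∃ τ : Strat M, AAdmissible Q τ ∧
    ∀ σ : Strat M, ∀ s₀ : Var → M, ¬ ψ.eval I (outcome σ τ Q 0 s₀)

/-- `φ^{y←x}`: remove `x` from the slash set of the quantifier at position `j`. -/
def removeSlash (Q : QPrefix) (j : ℕ) (x : Var) : QPrefix :=
  Q.set j ((Q.getD j default).1, (Q.getD j default).2.1,
    (Q.getD j default).2.2.erase x)

/-- An I∃∃ declaration of independence: position `iy` (existential) declares
independence from the existential position `ix` superordinated to it. -/
def IEE (Q : QPrefix) (ix iy : ℕ) : Prop :=
  ix < iy ∧ iy < Q.length ∧ ¬ qUniv Q ix ∧ ¬ qUniv Q iy ∧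
    qvar Q ix ∈ qslash Q iy

/-- Sameness of (three-valued) truth values on `(M,I)`. -/
def SameTV (M : Type*) (I : ℕ → List M → Prop) (Q Q' : QPrefix) (ψ : QF) : Prop :=
  (TrueIn M I Q ψ ↔ TrueIn M I Q' ψ) ∧ (FalseIn M I Q ψ ↔ FalseIn M I Q' ψ)

/-- Relevance of the I∃∃ at `(ix, iy)` in `Q⃗`: some sentence beginning with
`Q⃗` changes its truth value on some structure when the declaration of
independence is removed. -/
def Relevant (Q : QPrefix) (ix iy : ℕ) : Prop :=
  ∃ (R : QPrefix) (ψ : QF) (M : Type) (I : ℕ → List M → Prop),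
    ¬ SameTV M I (Q ++ R) (removeSlash Q iy (qvar Q ix) ++ R) ψ

/-- A broken signalling sequence
`((∀v_k/V_k),(∃v_{k-1}/V_{k-1}),…,(∃v_1/V_1),(∃x/X),(∃y/Y))` in `Q⃗`,
ending with positions `ix` (of `x`) and `iy` (of `y`); `l = [i_1, …, i_k]`
lists the positions of `v_1, …, v_k`. -/
def BrokenSignalling (Q : QPrefix) (ix iy : ℕ) : Prop :=
  ∃ l : List ℕ, l ≠ [] ∧
    l.head! < ix ∧ qvar Q l.head! ∉ qslash Q ix ∧
    List.Chain' (fun a b => b < a ∧ qvar Q b ∉ qslash Q a) l ∧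
    (∀ i ∈ l.dropLast, ¬ qUniv Q i) ∧
    qUniv Q l.getLast! ∧
    (∀ i ∈ l, qvar Q i ∈ qslash Q iy)

lemma outcome_congr {M : Type*} (σ τ : Strat M) :
    ∀ (Q Q' : QPrefix), Q'.length = Q.length →
      (∀ j, j < Q.length →
        (Q.getD j default).1 = (Q'.getD j default).1 ∧
        (Q.getD j default).2.1 = (Q'.getD j default).2.1) →
      ∀ (i : ℕ) (s : Var → M), outcome σ τ Q i s = outcome σ τ Q' i s := by
  intro Q
  induction Q with
  | nil =>
    intro Q' hlen _ i s
    cases Q' with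
    | nil => rfl
    | cons q' rest' => simp at hlen
  | cons q rest ih =>
    intro Q' hlen h i s
    cases Q' with
    | nil => simp at hlen
    | cons q' rest' =>
      have h0 := h 0 (by simp)
      simp only [List.getD_cons_zero] at h0
      simp only [outcome, h0.1, h0.2]
      exact ih rest' (by simpa using hlen)
        (fun j hj => by simpa using h (j + 1) (by simpa using hj)) (i + 1) _

lemma varsBefore_congr (Q Q' : QPrefix)
    (hlen : Q'.length = Q.length)
    (hvar : ∀ i, i < Q.length → qvar Q' i = qvar Q i) :
    ∀ i, varsBefore Q' i = varsBefore Q i := by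
  intro i
  unfold varsBefore
  congr 1
  apply List.ext_getElem
  · simp [hlen]
  · intro j h1 h2
    simp only [List.getElem_map, List.getElem_take]
    simp only [List.length_map, List.length_take, lt_min_iff] at h2
    have hjQ : j < Q.length := h2.2
    have hjQ' : j < Q'.length := by omega
    have := hvar j hjQ
    simp only [qvar, List.getD_eq_getElem _ _ hjQ, List.getD_eq_getElem _ _ hjQ']
      at this
    exact this

/-- modifying only the slash sets of existential quantifiers
(removing or adding variables) leaves Abélard's winning power, hence
falsity, unchanged. -/
theorem stmt5 (Q Q' : QPrefix)
    (hlen : Q'.length = Q.length)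
    (hkind : ∀ i, i < Q.length → (qUniv Q' i ↔ qUniv Q i))
    (hvar : ∀ i, i < Q.length → qvar Q' i = qvar Q i)
    (huslash : ∀ i, i < Q.length → qUniv Q i → qslash Q' i = qslash Q i)
    (M : Type*) (I : ℕ → List M → Prop) (ψ : QF) :
    ((∃ τ : Strat M, AAdmissible Q τ ∧
        ∀ σ : Strat M, ∀ s₀ : Var → M, ¬ ψ.eval I (outcome σ τ Q 0 s₀)) ↔
      (∃ τ : Strat M, AAdmissible Q' τ ∧
        ∀ σ : Strat M, ∀ s₀ : Var → M, ¬ ψ.eval I (outcome σ τ Q' 0 s₀))) ∧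
    (FalseIn M I Q ψ ↔ FalseIn M I Q' ψ) := by
  -- outcome is the same for Q and Q'
  have hkind' : ∀ j, j < Q.length →
      (Q.getD j default).1 = (Q'.getD j default).1 ∧
      (Q.getD j default).2.1 = (Q'.getD j default).2.1 := by
    intro j hj
    constructor
    · have := hkind j hj
      simp only [qUniv] at this
      exact Bool.eq_iff_iff.mpr this.symm
    · exact (hvar j hj).symm
  have hout : ∀ (σ τ : Strat M) (s : Var → M),
      outcome σ τ Q 0 s = outcome σ τ Q' 0 s :=
    fun σ τ s => outcome_congr σ τ Q Q' hlen hkind' 0 s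
  have hvb := varsBefore_congr Q Q' hlen hvar
  -- visible agrees at universal positions
  have hvis : ∀ i, i < Q.length → qUniv Q i → visible Q' i = visible Q i := by
    intro i hi hu
    unfold visible
    rw [hvb i, huslash i hi hu]
  have hiff : FalseIn M I Q ψ ↔ FalseIn M I Q' ψ := by
    constructor
    · rintro ⟨τ, hadm, hwin⟩
      refine ⟨τ, ?_, ?_⟩
      · intro i hi hu s t hag
        have hiQ : i < Q.length := by simpa [hlen] using hi
        have huQ : qUniv Q i := (hkind i hiQ).mp hu
        exact hadm i hiQ huQ s t (by rwa [hvis i hiQ huQ] at hag)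
      · intro σ s₀
        rw [← hout σ τ s₀]
        exact hwin σ s₀
    · rintro ⟨τ, hadm, hwin⟩
      refine ⟨τ, ?_, ?_⟩
      · intro i hi hu s t hag
        have hiQ' : i < Q'.length := by simpa [hlen] using hi
        have huQ' : qUniv Q' i := (hkind i hi).mpr hu
        exact hadm i hiQ' huQ' s t (by rwa [← hvis i hi hu] at hag)
      · intro σ s₀
        rw [hout σ τ s₀]
        exact hwin σ s₀
  exact ⟨hiff, hiff⟩
end

section
/- Every prenex existential IF sentence (a sentence whose prefix contains only existential quantifiers) is strongly equivalent to the first-order sentence obtained by emptying all slash sets: removing or adding any superordinate variables in the slash sets yields a strongly equivalent sentence. -/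
/-! In an existential prefix Éloïse's choice at position `n` may only depend on variables
quantified before `n`, and their values were themselves chosen earlier in the play. By induction
along the play, an admissible strategy therefore makes the same choices from every initial
assignment, so it can be replaced by a fixed sequence of choices, which is admissible whatever the
slash sets are. Abélard has no moves and the play ignores slash sets, so falsity is unaffected too. -/

def skeleton (Q : QPrefix) : List (Bool × Var) := Q.map fun q => (q.1, q.2.1)

lemma qUniv_iff_getElem {Q : QPrefix} {i : ℕ} (h : i < Q.length) : qUniv Q i ↔ Q[i].1 = true := by
  rw [qUniv, List.getD_eq_getElem Q default h]

lemma qvar_eq_getElem {Q : QPrefix} {i : ℕ} (h : i < Q.length) : qvar Q i = Q[i].2.1 := by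
  rw [qvar, List.getD_eq_getElem Q default h]

lemma qUniv_iff_of_skeleton_eq {Q Q' : QPrefix} (hs : skeleton Q = skeleton Q') (i : ℕ) :
    qUniv Q i ↔ qUniv Q' i := by
  have key : ∀ P : QPrefix, qUniv P i ↔ ((skeleton P).getD i default).1 = true := fun P => by
    rw [qUniv, skeleton]
    exact (congrArg (fun p : Bool × Var => p.1 = true)
      (List.getD_map P default (fun q : Quant => (q.1, q.2.1)))).to_iff.symm
  rw [key, key, hs]

lemma varsBefore_succ {Q : QPrefix} {n : ℕ} (hn : n < Q.length) :
    varsBefore Q (n + 1) = insert (qvar Q n) (varsBefore Q n) := by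
  rw [varsBefore, varsBefore, List.take_add_one, List.getElem?_eq_getElem hn, Option.toList_some,
    List.map_append, List.toFinset_append, List.map_singleton, qvar_eq_getElem hn, Finset.union_comm]
  rfl

lemma aAdmissible_of_forall_not_qUniv {M : Type*} {Q : QPrefix}
    (hQ : ∀ i < Q.length, ¬ qUniv Q i) (τ : Strat M) : AAdmissible Q τ :=
  fun i hi hu => absurd hu (hQ i hi)

section Outcome

variable {M : Type*}

lemma outcome_append (σ τ : Strat M) :
    ∀ (A B : QPrefix) (i : ℕ) (s : Var → M),
      outcome σ τ (A ++ B) i s = outcome σ τ B (i + A.length) (outcome σ τ A i s)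
  | [], _, _, _ => rfl
  | q :: A, B, i, s => by
    rw [List.cons_append, outcome, outcome, outcome_append σ τ A B, List.length_cons,
      Nat.add_right_comm, Nat.add_assoc]

lemma outcome_eq_of_skeleton_eq (σ τ : Strat M) :
    ∀ (Q Q' : QPrefix), skeleton Q = skeleton Q' →
      ∀ (i : ℕ) (s : Var → M), outcome σ τ Q i s = outcome σ τ Q' i s
  | [], [], _, _, _ => rfl
  | [], _ :: _, h, _, _ | _ :: _, [], h, _, _ => by simp [skeleton] at h
  | q :: Q, q' :: Q', h, i, s => by
    simp only [skeleton, List.map_cons, List.cons.injEq, Prod.mk.injEq] at h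
    obtain ⟨⟨hkind, hvar⟩, hrest⟩ := h
    rw [outcome, outcome, hkind, hvar]
    exact outcome_eq_of_skeleton_eq σ τ Q Q' hrest _ _

lemma outcome_take_succ_of_not_qUniv (σ τ : Strat M) {Q : QPrefix} {n : ℕ}
    (hn : n < Q.length) (he : ¬ qUniv Q n) (s : Var → M) :
    outcome σ τ (Q.take (n + 1)) 0 s =
      Function.update (outcome σ τ (Q.take n) 0 s) (qvar Q n)
        (σ n (outcome σ τ (Q.take n) 0 s)) := by
  rw [qUniv_iff_getElem hn, Bool.not_eq_true] at he
  rw [List.take_add_one, List.getElem?_eq_getElem hn, Option.toList_some, outcome_append,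
    List.length_take_of_le hn.le, zero_add]
  simp [outcome, he, qvar_eq_getElem hn]

end Outcome

section ExistentialPrefix

variable {M : Type*} {Q : QPrefix} {σ : Strat M}

lemma agreeOn_outcome_take (hQ : ∀ i < Q.length, ¬ qUniv Q i) (hσ : EAdmissible Q σ)
    (τ τ' : Strat M) (s t : Var → M) :
    ∀ n ≤ Q.length, agreeOn (outcome σ τ (Q.take n) 0 s) (outcome σ τ' (Q.take n) 0 t)
      (varsBefore Q n)
  | 0, _ => by simp [varsBefore, agreeOn]
  | n + 1, hn => by
    have hn : n < Q.length := hn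
    have ih := agreeOn_outcome_take hQ hσ τ τ' s t n hn.le
    have hchoice : σ n (outcome σ τ (Q.take n) 0 s) = σ n (outcome σ τ' (Q.take n) 0 t) :=
      hσ n hn (hQ n hn) _ _ fun v hv => ih v (Finset.sdiff_subset hv)
    rw [outcome_take_succ_of_not_qUniv σ τ hn (hQ n hn),
      outcome_take_succ_of_not_qUniv σ τ' hn (hQ n hn), varsBefore_succ hn]
    intro v hv
    by_cases hvn : v = qvar Q n
    · simp only [hvn, Function.update_self, hchoice]
    · rw [Function.update_of_ne hvn, Function.update_of_ne hvn]
      exact ih v ((Finset.mem_insert.1 hv).resolve_left hvn)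

lemma outcome_take_eq_const (hQ : ∀ i < Q.length, ¬ qUniv Q i) (hσ : EAdmissible Q σ)
    (τ τ₀ τ' : Strat M) (m₀ s : Var → M) :
    ∀ n ≤ Q.length, outcome σ τ (Q.take n) 0 s =
      outcome (fun j _ => σ j (outcome σ τ₀ (Q.take j) 0 m₀)) τ' (Q.take n) 0 s
  | 0, _ => rfl
  | n + 1, hn => by
    have hn : n < Q.length := hn
    have hchoice : σ n (outcome σ τ (Q.take n) 0 s) = σ n (outcome σ τ₀ (Q.take n) 0 m₀) :=
      hσ n hn (hQ n hn) _ _ fun v hv =>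
        agreeOn_outcome_take hQ hσ τ τ₀ s m₀ n hn.le v (Finset.sdiff_subset hv)
    rw [outcome_take_succ_of_not_qUniv _ τ hn (hQ n hn),
      outcome_take_succ_of_not_qUniv _ τ' hn (hQ n hn), hchoice,
      outcome_take_eq_const hQ hσ τ τ₀ τ' m₀ s n hn.le]

lemma exists_const_outcome_eq [Nonempty M] (hQ : ∀ i < Q.length, ¬ qUniv Q i)
    (hσ : EAdmissible Q σ) :
    ∃ c : ℕ → M, ∀ (τ : Strat M) (s : Var → M),
      outcome σ τ Q 0 s = outcome (fun j _ => c j) τ Q 0 s := by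
  refine ⟨fun j => σ j (outcome σ σ (Q.take j) 0 fun _ => Classical.arbitrary M), fun τ s => ?_⟩
  simpa only [List.take_length] using
    outcome_take_eq_const hQ hσ τ σ τ (fun _ => Classical.arbitrary M) s Q.length le_rfl

lemma TrueIn.of_skeleton_eq {I : ℕ → List M → Prop} {ψ : QF} {Q' : QPrefix}
    (hQ : ∀ i < Q.length, ¬ qUniv Q i) (hs : skeleton Q = skeleton Q')
    (h : TrueIn M I Q ψ) : TrueIn M I Q' ψ := by
  obtain ⟨σ, hσ, hwin⟩ := h
  cases isEmpty_or_nonempty M with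
  | inl _ => exact ⟨σ, fun _ _ _ s => isEmptyElim (s 0), fun _ s => isEmptyElim (s 0)⟩
  | inr _ =>
    obtain ⟨c, hc⟩ := exists_const_outcome_eq hQ hσ
    refine ⟨fun j _ => c j, fun _ _ _ _ _ _ => rfl, fun τ s => ?_⟩
    rw [← outcome_eq_of_skeleton_eq _ _ Q Q' hs, ← hc]
    exact hwin τ s

lemma FalseIn.of_skeleton_eq {I : ℕ → List M → Prop} {ψ : QF} {Q' : QPrefix}
    (hQ' : ∀ i < Q'.length, ¬ qUniv Q' i) (hs : skeleton Q = skeleton Q')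
    (h : FalseIn M I Q ψ) : FalseIn M I Q' ψ := by
  obtain ⟨τ, -, hwin⟩ := h
  exact ⟨τ, aAdmissible_of_forall_not_qUniv hQ' τ,
    fun σ s => outcome_eq_of_skeleton_eq σ τ Q Q' hs 0 s ▸ hwin σ s⟩

lemma sameTV_of_skeleton_eq (I : ℕ → List M → Prop) (ψ : QF) {Q' : QPrefix}
    (hQ : ∀ i < Q.length, ¬ qUniv Q i) (hs : skeleton Q = skeleton Q') :
    SameTV M I Q Q' ψ := by
  have hlen : Q'.length = Q.length := by simpa [skeleton] using congrArg List.length hs.symm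
  have hQ' : ∀ i < Q'.length, ¬ qUniv Q' i := fun i hi =>
    (qUniv_iff_of_skeleton_eq hs i).not.1 (hQ i (hlen ▸ hi))
  exact ⟨⟨TrueIn.of_skeleton_eq hQ hs, TrueIn.of_skeleton_eq hQ' hs.symm⟩,
    ⟨FalseIn.of_skeleton_eq hQ' hs, FalseIn.of_skeleton_eq hQ hs.symm⟩⟩

end ExistentialPrefix

theorem stmt11_general (Q Q' : QPrefix)
    (hexQ : ∀ i, i < Q.length → ¬ qUniv Q i)
    (hlen : Q'.length = Q.length)
    (hexQ' : ∀ i, i < Q.length → ¬ qUniv Q' i)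
    (hvar : ∀ i, i < Q.length → qvar Q' i = qvar Q i)
    (ψ : QF) (M : Type*) (I : ℕ → List M → Prop) :
    SameTV M I Q Q' ψ ∧
    ((∀ i, i < Q.length → qslash Q i ⊆ varsBefore Q i) →
      SameTV M I Q (Q.map (fun q => (q.1, q.2.1, (∅ : Finset Var)))) ψ) := by
  have hskel : skeleton Q = skeleton Q' := by
    refine List.ext_getElem (by simp [skeleton, hlen]) fun i hi hi' => ?_
    have hiQ : i < Q.length := by simpa [skeleton] using hi
    have hiQ' : i < Q'.length := hlen ▸ hiQ
    have hkind := hexQ i hiQ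
    have hkind' := hexQ' i hiQ
    have hv := hvar i hiQ
    rw [qUniv_iff_getElem hiQ, Bool.not_eq_true] at hkind
    rw [qUniv_iff_getElem hiQ', Bool.not_eq_true] at hkind'
    rw [qvar_eq_getElem hiQ, qvar_eq_getElem hiQ'] at hv
    simp [skeleton, hkind, hkind', hv]
  refine ⟨sameTV_of_skeleton_eq I ψ hexQ hskel, fun _ => sameTV_of_skeleton_eq I ψ hexQ ?_⟩
  simp [skeleton, Function.comp_def]

/-- in a prenex existential IF sentence, removing or adding
any superordinated variables in the slash sets yields a strongly equivalent
sentence; in particular (for regular prefixes) emptying all slash sets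
yields a strongly equivalent first-order sentence. -/
theorem stmt11 (Q Q' : QPrefix)
    (hexQ : ∀ i, i < Q.length → ¬ qUniv Q i)
    (hlen : Q'.length = Q.length)
    (hexQ' : ∀ i, i < Q.length → ¬ qUniv Q' i)
    (hvar : ∀ i, i < Q.length → qvar Q' i = qvar Q i)
    (hmod : ∀ i, i < Q.length →
      qslash Q' i \ varsBefore Q i = qslash Q i \ varsBefore Q i)
    (ψ : QF) (M : Type*) (I : ℕ → List M → Prop) :
    SameTV M I Q Q' ψ ∧
    ((∀ i, i < Q.length → qslash Q i ⊆ varsBefore Q i) →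
      SameTV M I Q (Q.map (fun q => (q.1, q.2.1, (∅ : Finset Var)))) ψ) :=
  stmt11_general Q Q' hexQ hlen hexQ' hvar ψ M I
end
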